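/- For every n ≥ 1, the total mutual-visibility number of the Sierpiński triangle graph is μ_t(ST_3^n) = 3, and the unique maximum total mutual-visibility set is the set of three extreme vertices of ST_3^n. -/

import Mathlib

namespace SierpinskiTriangle

/-- The unit upward triangle ("cell") with lower-left corner `c` is present in the
level-`n` Sierpiński triangle (Pascal-mod-2 characterization). -/
def Cell (n : ℕ) (c : ℕ × ℕ) : Prop :=
  Nat.land c.1 c.2 = 0 ∧ c.1 + c.2 < 2 ^ n

/-- The three corner points of the cell with lower-left corner `c`. -/
def cellCorners (c : ℕ × ℕ) : Set (ℕ × ℕ) :=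
  {c, (c.1 + 1, c.2), (c.1, c.2 + 1)}

/-- The Sierpiński triangle graph `ST₃ⁿ`, realized on the ambient type `ℕ × ℕ`
(points that are not vertices of `ST₃ⁿ` are isolated). Two distinct points are
adjacent iff they are corners of a common present cell. -/
def graph (n : ℕ) : SimpleGraph (ℕ × ℕ) where
  Adj u v := u ≠ v ∧ ∃ c, Cell n c ∧ u ∈ cellCorners c ∧ v ∈ cellCorners c
  symm := ⟨fun u v ⟨huv, c, hc, hu, hv⟩ => ⟨huv.symm, c, hc, hv, hu⟩⟩
  loopless := ⟨fun u h => h.1 rfl⟩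

/-- The vertex set of `ST₃ⁿ`. -/
def verts (n : ℕ) : Set (ℕ × ℕ) := {v | ∃ c, Cell n c ∧ v ∈ cellCorners c}

/-- The three extreme vertices of `ST₃ⁿ`. -/
def extreme (n : ℕ) : Set (ℕ × ℕ) := {(0, 0), (2 ^ n, 0), (0, 2 ^ n)}

/-- `IsCopy n m o` : the translate by `o` of `ST₃ᵐ` is one of the canonical copies
of `ST₃ᵐ` inside `ST₃ⁿ` arising from the recursive construction. -/
def IsCopy (n m : ℕ) (o : ℕ × ℕ) : Prop :=
  ∃ i j : ℕ, o = (i * 2 ^ m, j * 2 ^ m) ∧ Nat.land i j = 0 ∧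
    i * 2 ^ m + j * 2 ^ m + 2 ^ m ≤ 2 ^ n

/-- The vertex set of the copy of `ST₃ᵐ` at offset `o`. -/
def copyVerts (m : ℕ) (o : ℕ × ℕ) : Set (ℕ × ℕ) :=
  (fun v : ℕ × ℕ => (o.1 + v.1, o.2 + v.2)) '' verts m

/-- The extreme vertices of the copy of `ST₃ᵐ` at offset `o`. -/
def copyExtreme (m : ℕ) (o : ℕ × ℕ) : Set (ℕ × ℕ) :=
  {(o.1, o.2), (o.1 + 2 ^ m, o.2), (o.1, o.2 + 2 ^ m)}

/-- A walk is a shortest (geodesic) walk if its length equals the graph distance. -/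
def IsShortest {V : Type*} (G : SimpleGraph V) {u v : V} (w : G.Walk u v) : Prop :=
  w.length = G.dist u v

/-- `u` and `v` are `M`-visible: some shortest `u,v`-path avoids `M \ {u, v}`. -/
def Visible {V : Type*} (G : SimpleGraph V) (M : Set V) (u v : V) : Prop :=
  ∃ w : G.Walk u v, IsShortest G w ∧ ∀ x ∈ w.support, x ∈ M → x = u ∨ x = v

/-- The interval `I(u,v)`: the set of vertices lying on some shortest `u,v`-path. -/
def interval {V : Type*} (G : SimpleGraph V) (u v : V) : Set V :=
  {x | ∃ w : G.Walk u v, IsShortest G w ∧ x ∈ w.support}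

/-- `M` is a mutual-visibility set of `ST₃ⁿ`. -/
def IsMutualVisSet (n : ℕ) (M : Set (ℕ × ℕ)) : Prop :=
  M ⊆ verts n ∧ ∀ u ∈ M, ∀ v ∈ M, Visible (graph n) M u v

/-- `M` is a total mutual-visibility set of `ST₃ⁿ`. -/
def IsTotalMutualVisSet (n : ℕ) (M : Set (ℕ × ℕ)) : Prop :=
  M ⊆ verts n ∧ ∀ u ∈ verts n, ∀ v ∈ verts n, Visible (graph n) M u v

/-- `M` is an outer mutual-visibility set of `ST₃ⁿ`. -/
def IsOuterMutualVisSet (n : ℕ) (M : Set (ℕ × ℕ)) : Prop :=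
  IsMutualVisSet n M ∧ ∀ u ∈ M, ∀ v ∈ verts n \ M, Visible (graph n) M u v

/-- `M` is a dual mutual-visibility set of `ST₃ⁿ`. -/
def IsDualMutualVisSet (n : ℕ) (M : Set (ℕ × ℕ)) : Prop :=
  IsMutualVisSet n M ∧ ∀ u ∈ verts n \ M, ∀ v ∈ verts n \ M, Visible (graph n) M u v

/-- `M` is a general position set of `ST₃ⁿ`. -/
def IsGenPosSet (n : ℕ) (M : Set (ℕ × ℕ)) : Prop :=
  M ⊆ verts n ∧ ∀ u ∈ M, ∀ v ∈ M, ∀ w ∈ M, u ≠ v → u ≠ w → v ≠ w →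
    (graph n).dist u v ≠ (graph n).dist u w + (graph n).dist w v

/-- The proper vertices of the copy of `ST₃²` at offset `o` inside `ST₃ⁿ`: the vertices
of the copy lying on no shortest path between two of its extreme vertices. -/
def properVerts (n : ℕ) (o : ℕ × ℕ) : Set (ℕ × ℕ) :=
  copyVerts 2 o \
    (interval (graph n) (o.1, o.2) (o.1 + 4, o.2) ∪
     interval (graph n) (o.1, o.2) (o.1, o.2 + 4) ∪
     interval (graph n) (o.1 + 4, o.2) (o.1, o.2 + 4))

/-!
The cells of `ST₃ⁿ` are the odd entries in the first `2 ^ n` rows of Pascal's triangle: by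
Lucas's theorem, `a &&& b = 0 ↔ Odd ((a + b).choose a)`. Pascal's rule mod 2 then shows that
every non-extreme vertex `v` is the midpoint of two neighbours `u, w` whose only common
neighbour is `v`, so `v` lies on every shortest `u,w`-path and belongs to no total
mutual-visibility set. Conversely, the neighbourhood of an extreme vertex is a clique, so no
shortest path passes through it; as `ST₃ⁿ` is connected, the three extreme vertices form a
total mutual-visibility set.
-/

theorem _root_.Nat.land_eq_zero_iff_odd_choose (a b : ℕ) :
    a &&& b = 0 ↔ Odd ((a + b).choose a) := by
  induction a using Nat.strong_induction_on generalizing b with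
  | _ a ih =>
  rcases Nat.eq_zero_or_pos a with rfl | ha
  · simp
  have hland : a &&& b = 0 ↔ ¬(a % 2 = 1 ∧ b % 2 = 1) ∧ a / 2 &&& b / 2 = 0 := by
    rw [← Nat.and_mod_two_eq_one, ← Nat.and_div_two]; omega
  have hlucas : (a + b).choose a % 2 =
      ((a + b) % 2).choose (a % 2) * ((a + b) / 2).choose (a / 2) % 2 :=
    Choose.choose_modEq_choose_mod_mul_choose_div_nat
  rw [hland, Nat.odd_iff, hlucas]
  by_cases hodd : a % 2 = 1 ∧ b % 2 = 1
  · have : (a + b) % 2 = 0 := by omega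
    simp [this, hodd.1, hodd.2]
  · have hdiv : (a + b) / 2 = a / 2 + b / 2 := by omega
    have hmod : ((a + b) % 2).choose (a % 2) = 1 := by
      rw [show (a + b) % 2 = a % 2 + b % 2 by omega]
      rcases Nat.mod_two_eq_zero_or_one a with h | h <;>
        rcases Nat.mod_two_eq_zero_or_one b with h' | h' <;> simp_all
    rw [ih (a / 2) (by omega) (b / 2), Nat.odd_iff, hdiv, hmod, one_mul]
    simp [hodd]

theorem _root_.Nat.succ_land_succ_eq_zero_iff (a b : ℕ) :
    (a + 1) &&& (b + 1) = 0 ↔ (a &&& (b + 1) = 0 ↔ (a + 1) &&& b ≠ 0) := by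
  simp only [Nat.land_eq_zero_iff_odd_choose, show a + 1 + (b + 1) = a + (b + 1) + 1 by ring,
    Nat.choose_succ_succ', show a + (b + 1) = a + 1 + b by ring, Nat.odd_add,
    ← Nat.not_odd_iff_even, ne_eq]

theorem _root_.Nat.land_ne_zero_of_add_eq_two_pow {a b n : ℕ} (h : a + b = 2 ^ n) (ha : 0 < a)
    (hb : 0 < b) : a &&& b ≠ 0 := by
  rw [Ne, Nat.land_eq_zero_iff_odd_choose, h, Nat.not_odd_iff_even, even_iff_two_dvd]
  exact Nat.prime_two.dvd_choose_pow (by omega) (by omega)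

open SimpleGraph

section Visibility

variable {V : Type*} {G : SimpleGraph V}

theorem IsShortest.eq_or_eq_of_isClique_neighborSet {u v x : V} {w : G.Walk u v}
    (hw : IsShortest G w) (hx : x ∈ w.support) (hclique : G.IsClique (G.neighborSet x)) :
    x = u ∨ x = v := by
  by_contra! hne
  obtain ⟨q, r, rfl⟩ := Walk.mem_support_iff_exists_append.mp hx
  cases q with
  | nil => exact hne.1 rfl
  | cons hq q =>
  cases r with
  | nil => exact hne.2 rfl
  | @cons _ z _ hxz r =>
  obtain ⟨y, q', hyx, hq'⟩ := Walk.exists_cons_eq_concat hq q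
  have hlen : (Walk.append (Walk.cons hq q) (Walk.cons hxz r)).length
      = q'.length + r.length + 2 := by
    rw [hq']; simp only [Walk.length_append, Walk.length_concat, Walk.length_cons]; ring
  unfold IsShortest at hw
  rcases eq_or_ne y z with rfl | hyz
  · have := G.dist_le (q'.append r)
    simp only [Walk.length_append] at this
    omega
  · have := G.dist_le (q'.append (Walk.cons (hclique hyx.symm hxz hyz) r))
    simp only [Walk.length_append, Walk.length_cons] at this
    omega

theorem not_visible_of_commonNeighbors_subset_singleton {M : Set V} {u v w : V} (huv : G.Adj u v)
    (hvw : G.Adj v w) (huw : u ≠ w) (hnadj : ¬G.Adj u w)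
    (hcommon : G.commonNeighbors u w ⊆ {v}) (hv : v ∈ M) : ¬Visible G M u w := by
  rintro ⟨p, hp, havoid⟩
  have hdist : G.dist u w = 2 := by
    have hle : G.dist u w ≤ 2 := G.dist_le (Walk.cons huv (Walk.cons hvw Walk.nil))
    have h0 : G.dist u w ≠ 0 :=
      fun h => huw ((Walk.cons huv (Walk.cons hvw Walk.nil)).reachable.dist_eq_zero_iff.mp h)
    have h1 : G.dist u w ≠ 1 := fun h => hnadj (dist_eq_one_iff_adj.mp h)
    omega
  unfold IsShortest at hp
  rw [hdist] at hp
  match p, hp with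
  | Walk.cons hux (Walk.cons hxw Walk.nil), _ =>
    obtain rfl : _ = v := hcommon ⟨hux, hxw.symm⟩
    rcases havoid _ (by simp) hv with rfl | rfl
    · exact G.loopless.irrefl _ huv
    · exact G.loopless.irrefl _ hvw

end Visibility

section Geometry

variable {n : ℕ}

theorem cell_iff {c : ℕ × ℕ} : Cell n c ↔ c.1 &&& c.2 = 0 ∧ c.1 + c.2 < 2 ^ n := Iff.rfl

theorem mem_cellCorners_iff {v c : ℕ × ℕ} :
    v ∈ cellCorners c ↔ (v.1 = c.1 ∧ v.2 = c.2) ∨ (v.1 = c.1 + 1 ∧ v.2 = c.2) ∨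
      (v.1 = c.1 ∧ v.2 = c.2 + 1) := by
  simp [cellCorners, Prod.ext_iff]

theorem mem_verts_of_adj {u v : ℕ × ℕ} (h : (graph n).Adj u v) : u ∈ verts n :=
  let ⟨_, c, hc, hu, _⟩ := h
  ⟨c, hc, hu⟩

theorem reachable_of_mem_cellCorners {v c : ℕ × ℕ} (hc : Cell n c) (hv : v ∈ cellCorners c) :
    (graph n).Reachable v c := by
  by_cases hvc : v = c
  · rw [hvc]
  · exact SimpleGraph.Adj.reachable ⟨hvc, c, hc, hv, by simp [mem_cellCorners_iff]⟩

theorem graph_adj_coords {u v : ℕ × ℕ} (h : (graph n).Adj u v) :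
    (v.1 = u.1 + 1 ∧ v.2 = u.2) ∨ (u.1 = v.1 + 1 ∧ u.2 = v.2) ∨
    (v.1 = u.1 ∧ v.2 = u.2 + 1) ∨ (u.1 = v.1 ∧ u.2 = v.2 + 1) ∨
    (v.1 = u.1 + 1 ∧ u.2 = v.2 + 1) ∨ (u.1 = v.1 + 1 ∧ v.2 = u.2 + 1) := by
  obtain ⟨huv, c, -, hu, hv⟩ := h
  rw [Ne, Prod.ext_iff] at huv
  rw [mem_cellCorners_iff] at hu hv
  omega

theorem Cell.adj_right {a b : ℕ} (hc : Cell n (a, b)) : (graph n).Adj (a, b) (a + 1, b) :=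
  ⟨by simp, _, hc, by simp [mem_cellCorners_iff], by simp [mem_cellCorners_iff]⟩

theorem Cell.adj_up {a b : ℕ} (hc : Cell n (a, b)) : (graph n).Adj (a, b) (a, b + 1) :=
  ⟨by simp, _, hc, by simp [mem_cellCorners_iff], by simp [mem_cellCorners_iff]⟩

theorem Cell.adj_diag {a b : ℕ} (hc : Cell n (a, b)) : (graph n).Adj (a + 1, b) (a, b + 1) :=
  ⟨by simp, _, hc, by simp [mem_cellCorners_iff], by simp [mem_cellCorners_iff]⟩

theorem Cell.exists_cell_adj_of_ne_zero {c : ℕ × ℕ} (hc : Cell n c) (h0 : c ≠ (0, 0)) :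
    ∃ p, Cell n p ∧ (graph n).Adj p c ∧ p.1 + p.2 < c.1 + c.2 := by
  obtain ⟨a, b⟩ := c
  rw [cell_iff] at hc
  rcases a with _ | a <;> rcases b with _ | b
  · exact absurd rfl h0
  · exact ⟨(0, b), ⟨Nat.zero_and _, by simp only at hc ⊢; omega⟩,
      Cell.adj_up ⟨Nat.zero_and _, by simp only at hc ⊢; omega⟩, by simp⟩
  · exact ⟨(a, 0), ⟨Nat.and_zero _, by simp only at hc ⊢; omega⟩,
      Cell.adj_right ⟨Nat.and_zero _, by simp only at hc ⊢; omega⟩, by simp⟩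
  · have hpascal := (Nat.succ_land_succ_eq_zero_iff a b).mp hc.1
    by_cases hleft : a &&& (b + 1) = 0
    · have hp : Cell n (a, b + 1) := ⟨hleft, by simp only at hc ⊢; omega⟩
      exact ⟨_, hp, hp.adj_right, by simp⟩
    · have hp : Cell n (a + 1, b) :=
        ⟨not_not.mp (mt hpascal.mpr hleft), by simp only at hc ⊢; omega⟩
      exact ⟨_, hp, hp.adj_up, by simp⟩

theorem Cell.reachable_zero {c : ℕ × ℕ} (hc : Cell n c) : (graph n).Reachable c (0, 0) := by
  induction hs : c.1 + c.2 using Nat.strong_induction_on generalizing c with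
  | _ s ih =>
  by_cases h0 : c = (0, 0)
  · rw [h0]
  obtain ⟨p, hp, hpc, hlt⟩ := hc.exists_cell_adj_of_ne_zero h0
  exact hpc.symm.reachable.trans (ih _ (hs ▸ hlt) hp rfl)

theorem reachable_of_mem_verts {u v : ℕ × ℕ} (hu : u ∈ verts n) (hv : v ∈ verts n) :
    (graph n).Reachable u v := by
  obtain ⟨c, hc, huc⟩ := hu
  obtain ⟨d, hd, hvd⟩ := hv
  exact ((reachable_of_mem_cellCorners hc huc).trans hc.reachable_zero).trans
    ((reachable_of_mem_cellCorners hd hvd).trans hd.reachable_zero).symm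

end Geometry

section Extreme

variable {n : ℕ}

theorem extreme_subset_verts : extreme n ⊆ verts n := by
  have := Nat.two_pow_pos n
  rintro x (rfl | rfl | rfl)
  · exact ⟨(0, 0), ⟨Nat.zero_and _, this⟩, by simp [mem_cellCorners_iff]⟩
  · exact ⟨(2 ^ n - 1, 0), ⟨Nat.and_zero _, by simp only; omega⟩,
      by simp [mem_cellCorners_iff]; omega⟩
  · exact ⟨(0, 2 ^ n - 1), ⟨Nat.zero_and _, by simp only; omega⟩,
      by simp [mem_cellCorners_iff]; omega⟩

theorem ncard_extreme : (extreme n).ncard = 3 := by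
  have h0 := (Nat.two_pow_pos n).ne
  exact Set.ncard_eq_three.mpr
    ⟨_, _, _, by simp [Prod.ext_iff, h0], by simp [Prod.ext_iff, h0],
      by simp [Prod.ext_iff, h0], rfl⟩

theorem eq_of_mem_extreme_of_mem_cellCorners {x c d : ℕ × ℕ} (hx : x ∈ extreme n)
    (hc : Cell n c) (hd : Cell n d) (hxc : x ∈ cellCorners c) (hxd : x ∈ cellCorners d) :
    c = d := by
  rw [cell_iff] at hc hd
  rw [mem_cellCorners_iff] at hxc hxd
  rcases hx with rfl | rfl | rfl <;> simp only at hxc hxd <;> rw [Prod.ext_iff] <;> omega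

theorem isClique_neighborSet_of_mem_extreme {x : ℕ × ℕ} (hx : x ∈ extreme n) :
    (graph n).IsClique ((graph n).neighborSet x) := by
  rintro y ⟨-, c, hc, hxc, hyc⟩ z ⟨-, d, hd, hxd, hzd⟩ hyz
  obtain rfl := eq_of_mem_extreme_of_mem_cellCorners hx hc hd hxc hxd
  exact ⟨hyz, c, hc, hyc, hzd⟩

theorem isTotalMutualVisSet_extreme : IsTotalMutualVisSet n (extreme n) := by
  refine ⟨extreme_subset_verts, fun u hu v hv => ?_⟩
  obtain ⟨w, hw⟩ := (reachable_of_mem_verts hu hv).exists_walk_length_eq_dist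
  exact ⟨w, hw, fun x hx hxe =>
    IsShortest.eq_or_eq_of_isClique_neighborSet hw hx (isClique_neighborSet_of_mem_extreme hxe)⟩

end Extreme

section NonExtreme

variable {n : ℕ}

/-- In the triangular lattice `v` is then the only common neighbour of `u` and `w`. -/
def HasOppositeNeighbors (n : ℕ) (v : ℕ × ℕ) : Prop :=
  ∃ u w, (graph n).Adj u v ∧ (graph n).Adj v w ∧ u.1 + w.1 = 2 * v.1 ∧ u.2 + w.2 = 2 * v.2

theorem hasOppositeNeighbors_of_cells_horizontal {a b : ℕ} (h : Cell n (a, b))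
    (h' : Cell n (a + 1, b)) : HasOppositeNeighbors n (a + 1, b) :=
  ⟨_, _, h.adj_right, h'.adj_right, by simp only; omega, by simp only; omega⟩

theorem hasOppositeNeighbors_of_cells_vertical {a b : ℕ} (h : Cell n (a, b))
    (h' : Cell n (a, b + 1)) : HasOppositeNeighbors n (a, b + 1) :=
  ⟨_, _, h.adj_up, h'.adj_up, by simp only; omega, by simp only; omega⟩

theorem hasOppositeNeighbors_of_cells_diagonal {a b : ℕ} (h : Cell n (a, b + 1))
    (h' : Cell n (a + 1, b)) : HasOppositeNeighbors n (a + 1, b + 1) :=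
  ⟨_, _, h'.adj_diag, h.adj_diag, by simp only; omega, by simp only; omega⟩

theorem hasOppositeNeighbors_of_notMem_extreme {v : ℕ × ℕ} (hv : v ∈ verts n)
    (hne : v ∉ extreme n) : HasOppositeNeighbors n v := by
  obtain ⟨a, b⟩ := v
  obtain ⟨⟨c₁, c₂⟩, hc, hvc⟩ := hv
  rw [cell_iff] at hc
  rw [mem_cellCorners_iff] at hvc
  simp only [extreme, Set.mem_insert_iff, Set.mem_singleton_iff, Prod.ext_iff, not_or]
    at hne hvc
  rcases a with _ | a <;> rcases b with _ | b
  · simp at hne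
  · exact hasOppositeNeighbors_of_cells_vertical ⟨Nat.zero_and _, by simp only; omega⟩
      ⟨Nat.zero_and _, by simp only; omega⟩
  · exact hasOppositeNeighbors_of_cells_horizontal ⟨Nat.and_zero _, by simp only; omega⟩
      ⟨Nat.and_zero _, by simp only; omega⟩
  by_cases hcell : (a + 1) &&& (b + 1) = 0 ∧ a + 1 + (b + 1) < 2 ^ n
  · by_cases hleft : a &&& (b + 1) = 0
    · exact hasOppositeNeighbors_of_cells_horizontal ⟨hleft, by simp only; omega⟩ hcell
    · have hdown :=
        not_not.mp (mt ((Nat.succ_land_succ_eq_zero_iff a b).mp hcell.1).mpr hleft)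
      exact hasOppositeNeighbors_of_cells_vertical ⟨hdown, by simp only; omega⟩ hcell
  · -- `v` is not a cell, so `v.1 &&& v.2 ≠ 0` (on the hypotenuse as `2 ∣ (2 ^ n).choose k`),
    -- and by Pascal's rule both cells below `v` are present.
    have hland : (a + 1) &&& (b + 1) ≠ 0 := fun h =>
      Nat.land_ne_zero_of_add_eq_two_pow (n := n) (by omega) (by omega) (by omega) h
    have hpascal : a &&& (b + 1) = 0 ↔ (a + 1) &&& b = 0 := by
      have := (Nat.succ_land_succ_eq_zero_iff a b).not.mp hland
      tauto
    rcases hvc with ⟨rfl, rfl⟩ | ⟨h₁, rfl⟩ | ⟨rfl, h₂⟩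
    · exact absurd hc hcell
    · obtain rfl : c₁ = a := by omega
      exact hasOppositeNeighbors_of_cells_diagonal ⟨hc.1, hc.2⟩
        ⟨hpascal.mp hc.1, by simp only at hc ⊢; omega⟩
    · obtain rfl : c₂ = b := by omega
      exact hasOppositeNeighbors_of_cells_diagonal
        ⟨hpascal.mpr hc.1, by simp only at hc ⊢; omega⟩ ⟨hc.1, hc.2⟩

end NonExtreme

theorem HasOppositeNeighbors.exists_not_visible {n : ℕ} {M : Set (ℕ × ℕ)} {v : ℕ × ℕ}
    (h : HasOppositeNeighbors n v) (hv : v ∈ M) :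
    ∃ u ∈ verts n, ∃ w ∈ verts n, ¬Visible (graph n) M u w := by
  obtain ⟨u, w, huv, hvw, h₁, h₂⟩ := h
  refine ⟨u, mem_verts_of_adj huv, w, mem_verts_of_adj hvw.symm, ?_⟩
  have hu := graph_adj_coords huv
  have hw := graph_adj_coords hvw
  refine not_visible_of_commonNeighbors_subset_singleton huv hvw ?_ ?_ ?_ hv
  · rw [Ne, Prod.ext_iff]
    omega
  · intro huw
    have := graph_adj_coords huw
    omega
  · rintro x ⟨hux, hwx⟩
    have := graph_adj_coords hux
    have := graph_adj_coords hwx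
    rw [Set.mem_singleton_iff, Prod.ext_iff]
    omega

theorem IsTotalMutualVisSet.subset_extreme {n : ℕ} {M : Set (ℕ × ℕ)}
    (hM : IsTotalMutualVisSet n M) : M ⊆ extreme n := by
  intro v hvM
  by_contra hne
  obtain ⟨u, hu, w, hw, hvis⟩ :=
    (hasOppositeNeighbors_of_notMem_extreme (hM.1 hvM) hne).exists_not_visible hvM
  exact hvis (hM.2 u hu w hw)

theorem mu_t_eq_general (n : ℕ) :
    IsTotalMutualVisSet n (extreme n) ∧ (extreme n).ncard = 3 ∧
    ∀ M : Set (ℕ × ℕ), IsTotalMutualVisSet n M →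
      M.ncard ≤ 3 ∧ (M.ncard = 3 → M = extreme n) := by
  refine ⟨isTotalMutualVisSet_extreme, ncard_extreme, fun M hM => ?_⟩
  have hsub := hM.subset_extreme
  have hfin : (extreme n).Finite :=
    Set.finite_of_ncard_ne_zero (by rw [ncard_extreme]; norm_num)
  refine ⟨ncard_extreme (n := n) ▸ Set.ncard_le_ncard hsub hfin, fun h3 => ?_⟩
  exact Set.eq_of_subset_of_ncard_le hsub (by rw [ncard_extreme, h3]) hfin

/-- For every `n ≥ 1`, `μₜ(ST₃ⁿ) = 3`, and the unique maximum total mutual-visibility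
set of `ST₃ⁿ` is the set of its three extreme vertices. -/
theorem mu_t_eq (n : ℕ) (hn : 1 ≤ n) :
    IsTotalMutualVisSet n (extreme n) ∧ (extreme n).ncard = 3 ∧
    ∀ M : Set (ℕ × ℕ), IsTotalMutualVisSet n M →
      M.ncard ≤ 3 ∧ (M.ncard = 3 → M = extreme n) :=
  mu_t_eq_general n
end SierpinskiTriangle
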